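/- The string group L(p) has rank one: the canonical element c has infinite order, and the torsion subgroup of L(p) equals the kernel of the degree map δ: L(p) → ℤ defined by δ(x_i) = p/p_i, where p = lcm(p_1,...,p_t). -/

import Mathlib

open scoped BigOperators

def stringRelators {ι : Type} [DecidableEq ι] (p : ι → ℕ) : Set (ι → ℤ) :=
  { v | ∃ i j : ι, v = (p i : ℤ) • Pi.single i 1 - (p j : ℤ) • Pi.single j 1 }

abbrev StringGroup {ι : Type} [DecidableEq ι] (p : ι → ℕ) : Type :=
  (ι → ℤ) ⧸ AddSubgroup.closure (stringRelators p)

def xgen {ι : Type} [DecidableEq ι] (p : ι → ℕ) (i : ι) : StringGroup p :=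
  QuotientAddGroup.mk (Pi.single i 1)

def canon {ι : Type} [DecidableEq ι] (p : ι → ℕ) (i : ι) : StringGroup p :=
  (p i : ℤ) • xgen p i

/-! `δ` maps `c` to `p = lcm pᵢ ≠ 0`, so `c` has infinite order. Conversely, every generator
satisfies `p • xᵢ = (p / pᵢ) • pᵢ • xᵢ = δ(xᵢ) • c`, hence `p • g = δ(g) • c` for all `g`; so
`g ∈ ker δ` forces `p • g = 0`, while `ℤ` being torsion-free gives `torsion ⊆ ker δ`. -/

theorem AddMonoidHom.torsion_eq_ker_of_zsmul_eq_smul {G : Type*} [AddCommGroup G]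
    (δ : G →+ ℤ) (c : G) {N : ℤ} (hN : N ≠ 0) (h : ∀ g, N • g = δ g • c) :
    AddCommGroup.torsion G = δ.ker := by
  ext g
  refine ⟨fun hg => (δ.isOfFinAddOrder hg).eq_zero', fun hg => ?_⟩
  refine isOfFinAddOrder_iff_zsmul_eq_zero.2 ⟨N, hN, ?_⟩
  rw [h, AddMonoidHom.mem_ker.1 hg, zero_smul]

theorem Finset.natCast_mul_lcm_div {ι : Type*} (s : Finset ι) (f : ι → ℕ) {i : ι} (hi : i ∈ s) :
    (f i : ℤ) * (s.lcm f / f i : ℕ) = (s.lcm f : ℕ) := by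
  rw [← Nat.cast_mul, Nat.mul_div_cancel' (Finset.dvd_lcm hi)]

namespace StringGroup

variable {ι : Type} [DecidableEq ι] (p : ι → ℕ)

theorem canon_eq_canon (i j : ι) : canon p i = canon p j := by
  rw [← sub_eq_zero]
  exact (QuotientAddGroup.eq_zero_iff _).2 (AddSubgroup.subset_closure ⟨i, j, rfl⟩)

variable [Fintype ι]

def freeDegree : (ι → ℤ) →+ ℤ where
  toFun v := ∑ i, v i * (Finset.univ.lcm p / p i : ℕ)
  map_zero' := by simp
  map_add' v w := by simp [add_mul, Finset.sum_add_distrib]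

theorem freeDegree_single (i : ι) :
    freeDegree p (Pi.single i 1) = (Finset.univ.lcm p / p i : ℕ) := by
  simp [freeDegree, Pi.single_apply]

theorem closure_stringRelators_le_ker_freeDegree :
    AddSubgroup.closure (stringRelators p) ≤ (freeDegree p).ker := by
  rw [AddSubgroup.closure_le]
  rintro _ ⟨i, j, rfl⟩
  simp only [SetLike.mem_coe, AddMonoidHom.mem_ker, map_sub, map_zsmul, freeDegree_single,
    smul_eq_mul, Finset.natCast_mul_lcm_div _ _ (Finset.mem_univ _), sub_self]

def degree : StringGroup p →+ ℤ :=
  QuotientAddGroup.lift _ (freeDegree p) (closure_stringRelators_le_ker_freeDegree p)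

theorem degree_xgen (i : ι) : degree p (xgen p i) = (Finset.univ.lcm p / p i : ℕ) :=
  freeDegree_single p i

theorem degree_canon (i : ι) : degree p (canon p i) = (Finset.univ.lcm p : ℕ) := by
  rw [canon, map_zsmul, degree_xgen, smul_eq_mul,
    Finset.natCast_mul_lcm_div _ _ (Finset.mem_univ i)]

theorem lcm_zsmul_eq_degree_smul_canon (i : ι) (g : StringGroup p) :
    ((Finset.univ.lcm p : ℕ) : ℤ) • g = degree p g • canon p i := by
  suffices ((Finset.univ.lcm p : ℕ) : ℤ) • AddMonoidHom.id _ =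
      (zmultiplesHom _ (canon p i)).comp (degree p) from DFunLike.congr_fun this g
  ext j
  change ((Finset.univ.lcm p : ℕ) : ℤ) • xgen p j = degree p (xgen p j) • canon p i
  rw [degree_xgen, canon_eq_canon p i j, canon, smul_smul, mul_comm,
    Finset.natCast_mul_lcm_div _ _ (Finset.mem_univ j)]

end StringGroup

theorem stmt2 {t : ℕ} (p : Fin (t+1) → ℕ) (hp : ∀ i, 2 ≤ p i) :
    (∀ n : ℕ, 0 < n → n • canon p 0 ≠ 0) ∧
    ∃ δ : StringGroup p →+ ℤ,
      (∀ i, δ (xgen p i) = ((Finset.univ.lcm p) / p i : ℕ)) ∧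
      AddCommGroup.torsion (StringGroup p) = δ.ker := by
  have hL : ((Finset.univ.lcm p : ℕ) : ℤ) ≠ 0 :=
    Nat.cast_ne_zero.2 (Finset.lcm_ne_zero_iff.2 fun i _ => (Nat.zero_lt_two.trans_le (hp i)).ne')
  have htorsion := (StringGroup.degree p).torsion_eq_ker_of_zsmul_eq_smul (canon p 0) hL
    (StringGroup.lcm_zsmul_eq_degree_smul_canon p 0)
  refine ⟨fun n hn h => hL ?_, StringGroup.degree p, StringGroup.degree_xgen p, htorsion⟩
  have hc : canon p 0 ∈ (StringGroup.degree p).ker :=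
    htorsion ▸ isOfFinAddOrder_iff_nsmul_eq_zero.2 ⟨n, hn, h⟩
  rwa [AddMonoidHom.mem_ker, StringGroup.degree_canon] at hc
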